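/- arXiv:1502.07147 — 7 statements merged into one kernel-verified Lean document; each statement's English description precedes it below -/
import Mathlib

section
/- Let n ≥ 2 be an integer, let λ_1 > λ_2 > ... > λ_n > 0 be real numbers, and let α_1, ..., α_n be real numbers with α_k ≠ α_n for every k = 1, ..., n−1. Then (∏_{l=1}^n λ_l^{α_n}) · ∫_R ∏_{l=1}^{n−1} μ_l^{−α_n−1} · det[μ_j^{α_k}]_{j,k=1,...,n−1} dμ_1⋯dμ_{n−1} = (∏_{k=1}^{n−1} 1/(α_k − α_n)) · det[λ_j^{α_k}]_{j,k=1,...,n}, where R = {(μ_1,...,μ_{n−1}) ∈ ℝ^{n−1} : λ_{j+1} ≤ μ_j ≤ λ_j for every j = 1,...,n−1} (the interlacing region λ_1 ≥ μ_1 ≥ λ_2 ≥ μ_2 ≥ ⋯ ≥ λ_n). -/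
/-!
Multiplying the integrand by `∏ μ_l^{-α_n-1}` turns the `(n-1)`-determinant into
`det[μ_j^{γ_k - 1}]` with `γ_k = α_k - α_n`; each row depends on one variable only, so integrating
over the box `∏ [λ_{j+1}, λ_j]` integrates the determinant row by row, giving
`∏ γ_k⁻¹ · det[λ_j^{γ_k} - λ_{j+1}^{γ_k}]`. On the other side, pulling `λ_j^{α_n}` out of row `j`
leaves an `n × n` determinant whose last column is all ones, and subtracting consecutive rows
reduces it to the same `(n-1)`-determinant of differences.
-/

open MeasureTheory

theorem Matrix.det_rpow_add_const {ι : Type*} [Fintype ι] [DecidableEq ι] {x : ι → ℝ}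
    (hx : ∀ i, 0 < x i) (β : ι → ℝ) (c : ℝ) :
    (of fun i j => x i ^ (β j + c)).det = (∏ i, x i ^ c) * (of fun i j => x i ^ β j).det := by
  rw [← det_mul_column]
  congr with i j
  rw [Real.rpow_add (hx i), mul_comm, of_apply]

theorem Matrix.det_eq_det_sub_succ_of_forall_last_eq_one {R : Type*} [CommRing R] {n : ℕ}
    (A : Matrix (Fin (n + 1)) (Fin (n + 1)) R) (hA : ∀ i, A i (Fin.last n) = 1) :
    A.det = (of fun i j : Fin n => A i.castSucc j.castSucc - A i.succ j.castSucc).det := by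
  set B : Matrix (Fin (n + 1)) (Fin (n + 1)) R :=
    of fun i j => Fin.cases (A 0 j) (fun i => A i.succ j - A i.castSucc j) i
  have hAB : A.det = B.det :=
    det_eq_of_forall_row_eq_smul_add_pred 1 (fun _ => rfl) fun i j => by simp [B]
  have hB : B.submatrix Fin.succ Fin.castSucc =
      -of fun i j : Fin n => A i.castSucc j.castSucc - A i.succ j.castSucc := by
    ext i j
    simp [B]
  -- the last column of `B` is `(1, 0, …, 0)`, so expanding along it leaves one minor
  rw [hAB, det_succ_column B (Fin.last n), Fin.sum_univ_succ, Fin.succAbove_zero,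
    Fin.succAbove_last, hB, det_neg]
  simp [B, hA, ← mul_assoc, ← pow_add, ← two_mul, pow_mul]

theorem Matrix.det_rpow_eq_prod_mul_det_sub_succ {n : ℕ} {x : Fin (n + 1) → ℝ}
    (hx : ∀ i, 0 < x i) (α : Fin (n + 1) → ℝ) :
    (of fun j k => x j ^ α k).det = (∏ j, x j ^ α (Fin.last n)) *
      (of fun j k : Fin n => x j.castSucc ^ (α k.castSucc - α (Fin.last n)) -
        x j.succ ^ (α k.castSucc - α (Fin.last n))).det := by
  calc (of fun j k => x j ^ α k).det
      = (of fun j k => x j ^ ((α k - α (Fin.last n)) + α (Fin.last n))).det := by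
        simp_rw [sub_add_cancel]
    _ = (∏ j, x j ^ α (Fin.last n)) * (of fun j k => x j ^ (α k - α (Fin.last n))).det :=
        det_rpow_add_const hx _ _
    _ = _ := by
        rw [det_eq_det_sub_succ_of_forall_last_eq_one _ fun j => by simp]
        rfl

theorem MeasureTheory.integral_det_of_rows {𝕜 ι : Type*} [RCLike 𝕜] [Fintype ι] [DecidableEq ι]
    {E : ι → Type*} {mE : ∀ i, MeasurableSpace (E i)} {μ : (i : ι) → Measure (E i)}
    [∀ i, SigmaFinite (μ i)] (f : (i : ι) → ι → E i → 𝕜) (hf : ∀ i j, Integrable (f i j) (μ i)) :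
    ∫ x, (Matrix.of fun i j => f i j (x i)).det ∂(Measure.pi μ) =
      (Matrix.of fun i j => ∫ t, f i j t ∂(μ i)).det := by
  simp_rw [← Matrix.det_transpose (Matrix.of _), Matrix.det_apply', Matrix.transpose_apply,
    Matrix.of_apply]
  rw [integral_finsetSum _ fun σ _ => (Integrable.fintype_prod_dep fun i => hf i (σ i)).const_mul _]
  refine Finset.sum_congr rfl fun σ _ => ?_
  rw [integral_const_mul, integral_fintype_prod_eq_prod fun i => f i (σ i)]

theorem integrableOn_Icc_rpow {a b r : ℝ} (ha : 0 < a) :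
    IntegrableOn (fun t : ℝ => t ^ r) (Set.Icc a b) :=
  (continuousOn_id.rpow_const fun _ ht => Or.inl (ha.trans_le ht.1).ne').integrableOn_Icc

theorem integral_Icc_rpow_sub_one {a b γ : ℝ} (ha : 0 < a) (hab : a ≤ b) (hγ : γ ≠ 0) :
    ∫ t in Set.Icc a b, t ^ (γ - 1) = (b ^ γ - a ^ γ) / γ := by
  rw [integral_Icc_eq_integral_Ioc, ← intervalIntegral.integral_of_le hab,
    integral_rpow (Or.inr ⟨by simpa [sub_eq_iff_eq_add] using hγ, ?_⟩), sub_add_cancel]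
  rw [Set.uIcc_of_le hab]
  exact fun h => ha.not_ge h.1

theorem setIntegral_univ_pi_Icc_det_rpow {ι : Type*} [Fintype ι] [DecidableEq ι]
    {a b γ : ι → ℝ} (ha : ∀ i, 0 < a i) (hab : ∀ i, a i ≤ b i) (hγ : ∀ k, γ k ≠ 0) :
    ∫ x in Set.univ.pi fun i => Set.Icc (a i) (b i), (Matrix.of fun i k => x i ^ (γ k - 1)).det =
      (∏ k, (γ k)⁻¹) * (Matrix.of fun i k => b i ^ γ k - a i ^ γ k).det := by
  rw [volume_pi, Measure.restrict_pi_pi, integral_det_of_rows (fun _ k t => t ^ (γ k - 1))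
    fun i _ => integrableOn_Icc_rpow (ha i), ← Matrix.det_mul_row]
  congr with i k
  rw [Matrix.of_apply, integral_Icc_rpow_sub_one (ha i) (hab i) (hγ k), div_eq_inv_mul]

theorem stmt_0_general (N : ℕ) (lam : Fin (N + 1) → ℝ) (α : Fin (N + 1) → ℝ)
    (hanti : ∀ i j : Fin (N + 1), i < j → lam j < lam i) (hpos : ∀ i, 0 < lam i)
    (hα : ∀ k : Fin N, α k.castSucc ≠ α (Fin.last N)) :
    (∏ l, lam l ^ α (Fin.last N)) *
      ∫ mu in {mu : Fin N → ℝ | ∀ j : Fin N, lam j.succ ≤ mu j ∧ mu j ≤ lam j.castSucc},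
        (∏ l, mu l ^ (-(α (Fin.last N)) - 1)) *
          (Matrix.of fun j k : Fin N => mu j ^ α k.castSucc).det
    = (∏ k : Fin N, (α k.castSucc - α (Fin.last N))⁻¹) *
        (Matrix.of fun j k : Fin (N + 1) => lam j ^ α k).det := by
  set box := Set.univ.pi fun j : Fin N => Set.Icc (lam j.succ) (lam j.castSucc)
  have hbox : {mu : Fin N → ℝ | ∀ j, lam j.succ ≤ mu j ∧ mu j ≤ lam j.castSucc} = box := by
    ext mu
    simp only [Set.mem_ofPred_eq, box, Set.mem_univ_pi, Set.mem_Icc]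
  have hintegrand : Set.EqOn
      (fun mu : Fin N → ℝ => (∏ l, mu l ^ (-α (Fin.last N) - 1)) *
        (Matrix.of fun j k => mu j ^ α k.castSucc).det)
      (fun mu => (Matrix.of fun j k => mu j ^ ((α k.castSucc - α (Fin.last N)) - 1)).det) box :=
    fun mu hmu => by
      dsimp only
      rw [← Matrix.det_rpow_add_const fun j => (hpos j.succ).trans_le (hmu j trivial).1]
      congr with j k
      ring_nf
  rw [hbox, setIntegral_congr_fun (MeasurableSet.univ_pi fun _ => measurableSet_Icc) hintegrand,
    setIntegral_univ_pi_Icc_det_rpow (fun j => hpos j.succ)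
      (fun j => (hanti _ _ j.castSucc_lt_succ).le) fun k => sub_ne_zero.mpr (hα k),
    Matrix.det_rpow_eq_prod_mul_det_sub_succ hpos]
  ring

/-- the multiple integral evaluation of Lemma L1 (interlacing integral). -/
theorem stmt_0 (N : ℕ) (hN : 1 ≤ N) (lam : Fin (N + 1) → ℝ) (α : Fin (N + 1) → ℝ)
    (hanti : ∀ i j : Fin (N + 1), i < j → lam j < lam i) (hpos : ∀ i, 0 < lam i)
    (hα : ∀ k : Fin N, α k.castSucc ≠ α (Fin.last N)) :
    (∏ l, lam l ^ α (Fin.last N)) *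
      ∫ mu in {mu : Fin N → ℝ | ∀ j : Fin N, lam j.succ ≤ mu j ∧ mu j ≤ lam j.castSucc},
        (∏ l, mu l ^ (-(α (Fin.last N)) - 1)) *
          (Matrix.of fun j k : Fin N => mu j ^ α k.castSucc).det
    = (∏ k : Fin N, (α k.castSucc - α (Fin.last N))⁻¹) *
        (Matrix.of fun j k : Fin (N + 1) => lam j ^ α k).det :=
  stmt_0_general N lam α hanti hpos hα
end

section
/- Let n ≥ 1 be an integer and let α_1, ..., α_n be real numbers with α_l > −1 for all l. Then ∫_{λ_1 > λ_2 > ... > λ_n > 0} (∏_{k=1}^n e^{−λ_k}) · (∏_{1≤j<k≤n} (λ_j − λ_k)) · det[λ_j^{α_k}]_{j,k=1,...,n} dλ_1⋯dλ_n = (∏_{1≤j<k≤n} (α_j − α_k)) · ∏_{l=1}^n Γ(α_l + 1). -/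
/-!
Write `∏_{j<k} (λ_j - λ_k) = (-1)^(n choose 2) det[λ_j ^ i]` and absorb `e^{-λ_j}` together with
the constraint `λ_j > 0` into a second determinant `det[w_k(λ_j)]`, where `w_k = gammaWeight α_k`
is `t ↦ e^{-t} t^{α_k}` on `t > 0` and `0` elsewhere. A product of two determinants of this
shape is invariant under permuting the variables, so its integral over the chamber
`λ_1 > ⋯ > λ_n` is `1/n!` of its integral over `ℝⁿ`, and Andréief's identity evaluates the latter
as `n! det[∫ t^i w_k(t) dt] = n! det[Γ(α_k + 1 + i)]`. Finally `Γ(a + i) = Γ(a) (a)_i` with the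
rising factorial `(a)_i` a monic polynomial of degree `i`, so this determinant is
`∏ Γ(α_k + 1)` times the Vandermonde determinant of `α`.
-/

open MeasureTheory Finset Equiv Function Matrix
open scoped Nat

section Chambers

variable {α : Type*} [LinearOrder α] {n : ℕ}

lemma exists_perm_strictAnti_comp {x : Fin n → α} (hx : Injective x) :
    ∃ σ : Perm (Fin n), StrictAnti (x ∘ σ) := by
  refine ⟨Fin.revPerm.trans (Tuple.sort x), fun i j hij => ?_⟩
  have hmono : StrictMono (x ∘ Tuple.sort x) :=
    (Tuple.monotone_sort x).strictMono_of_injective (hx.comp (Tuple.sort x).injective)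
  simpa using hmono (Fin.rev_lt_rev.mpr hij)

lemma perm_eq_of_strictAnti_comp {x : Fin n → α} {σ τ : Perm (Fin n)}
    (hσ : StrictAnti (x ∘ σ)) (hτ : StrictAnti (x ∘ τ)) : σ = τ := by
  have hx : Injective x := by
    simpa using hσ.injective.comp (σ.symm.injective)
  ext i
  exact congrArg Fin.val (hx (congrFun (Tuple.unique_antitone hσ.antitone hτ.antitone) i))

lemma ae_injective {ι : Type*} [Fintype ι] : ∀ᵐ x : ι → ℝ, Injective x := by
  classical
  have hne : ∀ i j : ι, ∀ᵐ x : ι → ℝ, x i = x j → i = j := by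
    intro i j
    by_cases hij : i = j
    · exact .of_forall fun _ _ => hij
    let L : (ι → ℝ) →ₗ[ℝ] ℝ := (LinearMap.proj i : (ι → ℝ) →ₗ[ℝ] ℝ) - LinearMap.proj j
    have hL : LinearMap.ker L ≠ ⊤ := fun h => by
      have := LinearMap.mem_ker.1 (h ▸ Submodule.mem_top : Pi.single i 1 ∈ LinearMap.ker L)
      simp [L, Pi.single_eq_of_ne' hij] at this
    refine measure_mono_null (fun x hx => ?_) (Measure.addHaar_submodule volume _ hL)
    have hxij : x i = x j := by_contra fun h => hx fun h' => absurd h' h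
    simpa [L, sub_eq_zero] using hxij
  filter_upwards [ae_all_iff.2 fun i => ae_all_iff.2 (hne i)] with x hx i j using hx i j

lemma measurableSet_setOf_strictAnti : MeasurableSet {x : Fin n → ℝ | StrictAnti x} := by
  simp only [StrictAnti, Set.ofPred_forall]
  exact .iInter fun i => .iInter fun j => .iInter fun _ =>
    measurableSet_lt (measurable_pi_apply j) (measurable_pi_apply i)

variable {E : Type*} [NormedAddCommGroup E] [NormedSpace ℝ E]

lemma setIntegral_strictAnti_comp_perm (f : (Fin n → ℝ) → E) (σ : Perm (Fin n)) :
    ∫ x in {x | StrictAnti x}, f (x ∘ σ) = ∫ x in {x | StrictAnti (x ∘ σ.symm)}, f x := by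
  let T := MeasurableEquiv.arrowCongr' σ.symm (MeasurableEquiv.refl ℝ)
  have hpre : T ⁻¹' {x | StrictAnti (x ∘ σ.symm)} = {x | StrictAnti x} := by
    ext x
    change StrictAnti (x ∘ σ ∘ σ.symm) ↔ StrictAnti x
    simp
  rw [← hpre]
  exact (volume_preserving_arrowCongr' σ.symm (MeasurableEquiv.refl ℝ)
    (.id volume)).setIntegral_preimage_emb T.measurableEmbedding f _

theorem integral_eq_sum_perm_setIntegral_strictAnti {f : (Fin n → ℝ) → E} (hf : Integrable f) :
    ∫ x, f x = ∑ σ : Perm (Fin n), ∫ x in {x | StrictAnti x}, f (x ∘ σ) := by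
  let Q : Perm (Fin n) → Set (Fin n → ℝ) := fun σ => {x | StrictAnti (x ∘ σ.symm)}
  have hQ : ∀ σ, MeasurableSet (Q σ) := fun σ =>
    measurableSet_setOf_strictAnti.preimage (measurable_pi_lambda _ fun _ => measurable_pi_apply _)
  have hdisj : Pairwise (Disjoint on Q) := fun σ τ hne => Set.disjoint_left.2 fun x hσ hτ =>
    hne (symm_bijective.injective (perm_eq_of_strictAnti_comp hσ hτ))
  have hcover : ⋃ σ, Q σ =ᵐ[volume] Set.univ := by
    refine ae_eq_univ.2 (mem_ae_iff.1 ?_)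
    filter_upwards [ae_injective] with x hx
    obtain ⟨σ, hσ⟩ := exists_perm_strictAnti_comp hx
    exact Set.mem_iUnion.2 ⟨σ.symm, hσ⟩
  rw [Finset.sum_congr rfl fun σ _ => setIntegral_strictAnti_comp_perm f σ,
    ← tsum_fintype (L := .unconditional _),
    ← integral_iUnion hQ hdisj hf.integrableOn, setIntegral_congr_set hcover, Measure.restrict_univ]

theorem integral_eq_factorial_smul_setIntegral_strictAnti {f : (Fin n → ℝ) → E}
    (hf : Integrable f) (hsymm : ∀ (σ : Perm (Fin n)) x, f (x ∘ σ) = f x) :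
    ∫ x, f x = n ! • ∫ x in {x | StrictAnti x}, f x := by
  simp [integral_eq_sum_perm_setIntegral_strictAnti hf, hsymm, Fintype.card_perm]

end Chambers

section Andreief

variable {ι X : Type*} [Fintype ι]

lemma det_mul_det_eq_sum_perm_perm [DecidableEq ι] (f g : ι → X → ℝ) (x : ι → X) :
    (of fun i j => f i (x j)).det * (of fun i j => g i (x j)).det =
      ∑ σ : Perm ι, ∑ τ : Perm ι, ((Perm.sign σ : ℤ) : ℝ) * (Perm.sign τ : ℤ) *
        ∏ j, f (σ j) (x j) * g (τ j) (x j) := by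
  simp only [det_apply', of_apply, sum_mul_sum]
  refine sum_congr rfl fun σ _ => sum_congr rfl fun τ _ => ?_
  rw [prod_mul_distrib]
  ring

lemma sum_perm_perm_sign_mul_prod [DecidableEq ι] (H : Matrix ι ι ℝ) :
    ∑ σ : Perm ι, ∑ τ : Perm ι, ((Perm.sign σ : ℤ) : ℝ) * (Perm.sign τ : ℤ) *
      ∏ j, H (σ j) (τ j) = (Fintype.card ι)! * H.det := by
  have hrow : ∀ σ : Perm ι, ∑ τ : Perm ι, ((Perm.sign σ : ℤ) : ℝ) * (Perm.sign τ : ℤ) *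
      ∏ j, H (σ j) (τ j) = H.det := by
    intro σ
    have hσ : ((Perm.sign σ : ℤ) : ℝ) * (Perm.sign σ : ℤ) = 1 := by
      rw [← Int.cast_mul, ← Units.val_mul, Int.units_mul_self, Units.val_one, Int.cast_one]
    calc _ = ((Perm.sign σ : ℤ) : ℝ) * (H.submatrix σ id)ᵀ.det := by
          simp only [det_apply', mul_sum, mul_assoc, transpose_apply, submatrix_apply, id]
      _ = H.det := by rw [det_transpose, det_permute, ← mul_assoc, hσ, one_mul]
  simp [hrow, Fintype.card_perm]

lemma det_mul_det_comp_perm [DecidableEq ι] (f g : ι → X → ℝ)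
    (σ : Perm ι) (x : ι → X) :
    (of fun i j => f i ((x ∘ σ) j)).det * (of fun i j => g i ((x ∘ σ) j)).det =
      (of fun i j => f i (x j)).det * (of fun i j => g i (x j)).det := by
  have h : ∀ h : ι → X → ℝ,
      (of fun i j => h i ((x ∘ σ) j)).det = Perm.sign σ * (of fun i j => h i (x j)).det :=
    fun h => det_permute' σ (of fun i j => h i (x j))
  rw [h, h, mul_mul_mul_comm, ← Int.cast_mul, ← Units.val_mul, Int.units_mul_self,
    Units.val_one, Int.cast_one, one_mul]

variable [MeasurableSpace X] {μ : Measure X} [SigmaFinite μ] {f g : ι → X → ℝ}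

lemma integrable_prod_mul_prod (hfg : ∀ i k, Integrable (fun t => f i t * g k t) μ)
    (σ τ : ι → ι) :
    Integrable (fun x : ι → X => ∏ j, f (σ j) (x j) * g (τ j) (x j)) (Measure.pi fun _ => μ) :=
  Integrable.fintype_prod (f := fun j t => f (σ j) t * g (τ j) t) fun _ => hfg _ _

variable [DecidableEq ι]

theorem integrable_det_mul_det (hfg : ∀ i k, Integrable (fun t => f i t * g k t) μ) :
    Integrable (fun x : ι → X => (of fun i j => f i (x j)).det * (of fun i j => g i (x j)).det)
      (Measure.pi fun _ => μ) := by
  simp only [det_mul_det_eq_sum_perm_perm]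
  exact integrable_finsetSum _ fun σ _ => integrable_finsetSum _ fun τ _ =>
    (integrable_prod_mul_prod hfg σ τ).const_mul _

/-- Andréief's identity. -/
theorem integral_det_mul_det (hfg : ∀ i k, Integrable (fun t => f i t * g k t) μ) :
    ∫ x, (of fun i j => f i (x j)).det * (of fun i j => g i (x j)).det
      ∂(Measure.pi fun _ => μ) =
      (Fintype.card ι)! * (of fun i k => ∫ t, f i t * g k t ∂μ).det := by
  have hterm : ∀ σ τ : Perm ι, Integrable (fun x : ι → X => ((Perm.sign σ : ℤ) : ℝ) *
      (Perm.sign τ : ℤ) * ∏ j, f (σ j) (x j) * g (τ j) (x j)) (Measure.pi fun _ => μ) :=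
    fun σ τ => (integrable_prod_mul_prod hfg σ τ).const_mul _
  simp only [det_mul_det_eq_sum_perm_perm, ← sum_perm_perm_sign_mul_prod]
  rw [integral_finsetSum _ fun σ _ => integrable_finsetSum _ fun τ _ => hterm σ τ]
  refine sum_congr rfl fun σ _ => ?_
  rw [integral_finsetSum _ fun τ _ => hterm σ τ]
  refine sum_congr rfl fun τ _ => ?_
  rw [integral_const_mul, integral_fintype_prod_eq_prod (fun j t => f (σ j) t * g (τ j) t)]
  rfl

end Andreief

lemma Fin.sum_card_Ioi (n : ℕ) : ∑ j : Fin n, #(Ioi j) = n.choose 2 := by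
  simp only [Fin.card_Ioi]
  rw [Fin.sum_univ_eq_sum_range (fun j => n - 1 - j), sum_range_reflect (fun j => j) n,
    sum_range_id, Nat.choose_two_right]

lemma prod_Ioi_sub_eq_neg_one_pow_mul_det_vandermonde {R : Type*} [CommRing R] {n : ℕ}
    (v : Fin n → R) :
    ∏ j, ∏ k ∈ Ioi j, (v j - v k) = (-1) ^ n.choose 2 * (vandermonde v).det := by
  rw [det_vandermonde, ← Fin.sum_card_Ioi, ← prod_pow_eq_pow_sum, ← prod_mul_distrib]
  refine prod_congr rfl fun j _ => ?_
  rw [← prod_const, ← prod_mul_distrib]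
  exact prod_congr rfl fun k _ => by ring

lemma Real.Gamma_add_nat_eq_mul_ascPochhammer_eval {x : ℝ} (hx : ∀ k : ℕ, x ≠ -k) (m : ℕ) :
    Real.Gamma (x + m) = Real.Gamma x * (ascPochhammer ℝ m).eval x := by
  induction m with
  | zero => simp
  | succ m ih =>
    have hxm : x + m ≠ 0 := fun h => hx m (eq_neg_of_add_eq_zero_left h)
    rw [Nat.cast_succ, ← add_assoc, Real.Gamma_add_one hxm, ih, ascPochhammer_succ_eval]
    ring

lemma det_Gamma_add_nat {n : ℕ} {α : Fin n → ℝ} (hα : ∀ k, -1 < α k) :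
    (of fun i k : Fin n => Real.Gamma (α k + 1 + i)).det =
      (∏ k, Real.Gamma (α k + 1)) * (vandermonde α).det := by
  have hx : ∀ k (m : ℕ), α k + 1 ≠ -m := fun k m h => by
    have : (0 : ℝ) ≤ m := m.cast_nonneg
    linarith [hα k]
  rw [← det_transpose, ← det_vandermonde_add α 1,
    det_eval_matrixOfPolynomials_eq_det_vandermonde _ (fun i => ascPochhammer ℝ i)
      (fun i => ascPochhammer_natDegree ℝ i) (fun i => monic_ascPochhammer ℝ i),
    ← det_mul_column]
  congr 1
  ext k i
  simp [Real.Gamma_add_nat_eq_mul_ascPochhammer_eval (hx k)]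

section GammaIntegral

open Real

noncomputable def gammaWeight (a : ℝ) : ℝ → ℝ := (Set.Ioi 0).indicator fun t => exp (-t) * t ^ a

lemma pow_mul_gammaWeight (a : ℝ) (m : ℕ) :
    (fun t : ℝ => t ^ m * gammaWeight a t) = gammaWeight (a + 1 + m - 1) := by
  ext t
  by_cases ht : t ∈ Set.Ioi (0 : ℝ)
  · rw [gammaWeight, gammaWeight, Set.indicator_of_mem ht, Set.indicator_of_mem ht,
      show a + 1 + m - 1 = a + m by ring, rpow_add ht, rpow_natCast]
    ring
  · simp [gammaWeight, Set.indicator_of_notMem ht]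

lemma integrable_pow_mul_gammaWeight {a : ℝ} (ha : -1 < a) (m : ℕ) :
    Integrable (fun t : ℝ => t ^ m * gammaWeight a t) := by
  rw [pow_mul_gammaWeight, gammaWeight, integrable_indicator_iff measurableSet_Ioi]
  exact GammaIntegral_convergent (by linarith [(m.cast_nonneg : (0 : ℝ) ≤ m)])

lemma integral_pow_mul_gammaWeight {a : ℝ} (ha : -1 < a) (m : ℕ) :
    ∫ t : ℝ, t ^ m * gammaWeight a t = Gamma (a + 1 + m) := by
  rw [pow_mul_gammaWeight, gammaWeight, integral_indicator measurableSet_Ioi,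
    Gamma_eq_integral (by linarith [(m.cast_nonneg : (0 : ℝ) ≤ m)])]

end GammaIntegral

lemma indicator_pos_exp_mul_prod_sub_mul_det_eq {n : ℕ} (α x : Fin n → ℝ) :
    {x : Fin n → ℝ | ∀ i, 0 < x i}.indicator (fun x => (∏ k, Real.exp (-x k)) *
      (∏ j, ∏ k ∈ Ioi j, (x j - x k)) * (of fun j k => x j ^ α k).det) x =
    (-1) ^ n.choose 2 * ((of fun i j : Fin n => x j ^ (i : ℕ)).det *
      (of fun k j => gammaWeight (α k) (x j)).det) := by
  by_cases hx : x ∈ {x : Fin n → ℝ | ∀ i, 0 < x i}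
  · have hweight : (of fun k j => gammaWeight (α k) (x j)) =
        of fun k j => Real.exp (-x j) * (of fun j k => x j ^ α k)ᵀ k j := by
      ext k j
      exact Set.indicator_of_mem (hx j) (fun t : ℝ => Real.exp (-t) * t ^ α k)
    have hpow : (of fun i j : Fin n => x j ^ (i : ℕ)) = (vandermonde x)ᵀ := rfl
    rw [Set.indicator_of_mem hx, hweight, det_mul_row, det_transpose, hpow, det_transpose,
      prod_Ioi_sub_eq_neg_one_pow_mul_det_vandermonde]
    ring
  · obtain ⟨j, hj⟩ := not_forall.1 hx
    rw [Set.indicator_of_notMem hx, det_eq_zero_of_column_eq_zero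
      (A := of fun k j => gammaWeight (α k) (x j)) j
      fun k => Set.indicator_of_notMem (show x j ∉ Set.Ioi 0 from hj)
        (fun t : ℝ => Real.exp (-t) * t ^ α k), mul_zero, mul_zero]

theorem stmt_1_general (n : ℕ) (α : Fin n → ℝ) (hα : ∀ l, -1 < α l) :
    ∫ lam in {lam : Fin n → ℝ | (∀ i j : Fin n, i < j → lam j < lam i) ∧ ∀ i, 0 < lam i},
      (∏ k, Real.exp (-lam k)) * (∏ j, ∏ k ∈ Finset.Ioi j, (lam j - lam k)) *
        (Matrix.of fun j k : Fin n => lam j ^ α k).det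
    = (∏ j, ∏ k ∈ Finset.Ioi j, (α j - α k)) * ∏ l, Real.Gamma (α l + 1) := by
  have hfg : ∀ i k : Fin n, Integrable (fun t : ℝ => t ^ (i : ℕ) * gammaWeight (α k) t) :=
    fun i k => integrable_pow_mul_gammaWeight (hα k) i
  have horthant : MeasurableSet {x : Fin n → ℝ | ∀ i, 0 < x i} := by
    simpa only [Set.ofPred_forall] using
      MeasurableSet.iInter fun i => measurableSet_lt measurable_const (measurable_pi_apply i)
  let K : (Fin n → ℝ) → ℝ := fun x =>
    (of fun i j : Fin n => x j ^ (i : ℕ)).det * (of fun k j => gammaWeight (α k) (x j)).det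
  calc _ = ∫ x in {x : Fin n → ℝ | StrictAnti x}, (-1) ^ n.choose 2 * K x := by
        rw [Set.ofPred_and, ← setIntegral_indicator horthant]
        simp_rw [indicator_pos_exp_mul_prod_sub_mul_det_eq]
        rfl
    _ = (-1) ^ n.choose 2 * (n ! : ℝ)⁻¹ * ∫ x, K x := by
        rw [integral_const_mul, integral_eq_factorial_smul_setIntegral_strictAnti
          (integrable_det_mul_det hfg) (det_mul_det_comp_perm _ _), nsmul_eq_mul]
        field_simp
        rfl
    _ = (-1) ^ n.choose 2 * (of fun i k : Fin n => Real.Gamma (α k + 1 + i)).det := by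
        rw [volume_pi, integral_det_mul_det hfg, Fintype.card_fin]
        simp only [integral_pow_mul_gammaWeight (hα _)]
        field_simp
    _ = _ := by
        rw [det_Gamma_add_nat hα, prod_Ioi_sub_eq_neg_one_pow_mul_det_vandermonde]
        ring

/-- normalization identity of the Laguerre upper-triangular ensemble. -/
theorem stmt_1 (n : ℕ) (hn : 1 ≤ n) (α : Fin n → ℝ) (hα : ∀ l, -1 < α l) :
    ∫ lam in {lam : Fin n → ℝ | (∀ i j : Fin n, i < j → lam j < lam i) ∧ ∀ i, 0 < lam i},
      (∏ k, Real.exp (-lam k)) * (∏ j, ∏ k ∈ Finset.Ioi j, (lam j - lam k)) *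
        (Matrix.of fun j k : Fin n => lam j ^ α k).det
    = (∏ j, ∏ k ∈ Finset.Ioi j, (α j - α k)) * ∏ l, Real.Gamma (α l + 1) :=
  stmt_1_general n α hα
end

section
/- Let θ > 0 and c > −1 be real, let j ≥ 1 be an integer, and define the polynomial q_j(y) = (−1)^j Γ(θ j + c + 1) ∑_{l=0}^{j} (−1)^l (j choose l) y^l / Γ(θ l + c + 1). Then for every integer m with 0 ≤ m < j one has ∫_0^∞ x^{c+m} e^{−x} q_j(x^θ) dx = 0. -/
/-!
Expanding `q_j(x^θ)` termwise turns the moment `∫ x^(c+m) e^(-x) q_j(x^θ)` into a multiple of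
`∑ₗ (-1)^l (j choose l) Γ(θl + c + m + 1) / Γ(θl + c + 1)`. Each Gamma ratio is the rising
factorial `(θl + c + 1)ₘ`, a polynomial of degree `m < j` in `l`, and the `j`-th finite difference
`∑ₗ (-1)^l (j choose l) P(l)` of a polynomial of degree `< j` vanishes.
-/

open MeasureTheory

open Polynomial Finset Real Set

theorem Real.Gamma_add_nat_eq_mul_ascPochhammer_eval_s5 {s : ℝ} (hs : 0 < s) (n : ℕ) :
    Gamma (s + n) = Gamma s * (ascPochhammer ℝ n).eval s := by
  induction n with
  | zero => simp
  | succ n ih =>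
    rw [Nat.cast_succ, ← add_assoc, Gamma_add_one (by positivity), ih, ascPochhammer_succ_eval]
    ring

theorem Polynomial.sum_range_alternating_choose_mul_eval_eq_zero {R : Type*} [CommRing R]
    {P : R[X]} {n : ℕ} (hP : P.natDegree < n) :
    ∑ k ∈ range (n + 1), (-1) ^ k * (n.choose k : R) * P.eval (k : R) = 0 := by
  have h := congr_fun (fwdDiff_iter_eq_zero_of_degree_lt hP) 0
  rw [fwdDiff_iter_eq_sum_shift, Pi.zero_apply] at h
  rw [← neg_one_pow_mul_eq_zero_iff (n := n), mul_sum, ← h]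
  refine sum_congr rfl fun k hk => ?_
  have hkn : k ≤ n := Nat.lt_succ_iff.mp (mem_range.mp hk)
  rw [zsmul_eq_mul, zero_add, nsmul_eq_mul, mul_one, ← pow_mul_pow_sub (-1 : R) hkn]
  push_cast
  ring_nf
  simp

theorem Real.Gamma_mul_natCast_add_add_nat {θ a : ℝ} (hθ : 0 ≤ θ) (ha : 0 < a) (l m : ℕ) :
    Gamma (θ * l + a + m) =
      Gamma (θ * l + a) * ((ascPochhammer ℝ m).comp (C θ * X + C a)).eval (l : ℝ) := by
  rw [Gamma_add_nat_eq_mul_ascPochhammer_eval_s5 (by positivity), eval_comp]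
  simp only [eval_add, eval_mul, eval_C, eval_X]

theorem Polynomial.natDegree_ascPochhammer_comp_linear_le {R : Type*} [CommSemiring R]
    [NoZeroDivisors R] [Nontrivial R] (m : ℕ) (θ a : R) :
    ((ascPochhammer R m).comp (C θ * X + C a)).natDegree ≤ m := by
  refine natDegree_comp_le.trans ?_
  rw [ascPochhammer_natDegree]
  exact (Nat.mul_le_mul_left m natDegree_linear_le).trans_eq (mul_one m)

theorem integral_rpow_mul_exp_neg {s : ℝ} (hs : -1 < s) :
    ∫ x in Ioi (0 : ℝ), x ^ s * exp (-x) = Gamma (s + 1) := by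
  simpa using integral_rpow_mul_exp_neg_rpow one_pos hs

theorem integral_rpow_mul_exp_neg_mul_sum_rpow_pow {θ c : ℝ} (hθ : 0 ≤ θ) (hc : -1 < c)
    (s : Finset ℕ) (b : ℕ → ℝ) :
    ∫ x in Ioi (0 : ℝ), x ^ c * exp (-x) * ∑ l ∈ s, b l * (x ^ θ) ^ l =
      ∑ l ∈ s, b l * Gamma (θ * l + c + 1) := by
  have hexp : ∀ l : ℕ, -1 < θ * l + c := fun l => by nlinarith [(Nat.cast_nonneg l : (0:ℝ) ≤ l)]
  have hint : ∀ l ∈ s, IntegrableOn (fun x => x ^ (θ * l + c) * exp (-x)) (Ioi 0) :=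
    fun l _ => by simpa using integrableOn_rpow_mul_exp_neg_rpow (hexp l) one_pos
  calc
    _ = ∫ x in Ioi (0 : ℝ), ∑ l ∈ s, b l * (x ^ (θ * l + c) * exp (-x)) := by
      refine setIntegral_congr_fun measurableSet_Ioi fun x (hx : 0 < x) => ?_
      simp only [mul_sum]
      refine sum_congr rfl fun l _ => ?_
      rw [← rpow_natCast, ← rpow_mul hx.le, rpow_add hx]
      ring
    _ = _ := by
      rw [integral_finsetSum s fun l hl => (hint l hl).const_mul (b l)]
      refine sum_congr rfl fun l _ => ?_
      rw [integral_const_mul, integral_rpow_mul_exp_neg (hexp l)]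

theorem stmt_5_general (θ c : ℝ) (hθ : 0 < θ) (hc : -1 < c) (j : ℕ)
    (q : ℝ → ℝ)
    (hq : ∀ y : ℝ, q y =
      (-1 : ℝ) ^ j * Real.Gamma (θ * j + c + 1) *
        ∑ l ∈ Finset.range (j + 1),
          (-1 : ℝ) ^ l * (j.choose l : ℝ) * y ^ l / Real.Gamma (θ * l + c + 1))
    (m : ℕ) (hm : m < j) :
    ∫ x in Set.Ioi (0 : ℝ), x ^ (c + (m : ℝ)) * Real.exp (-x) * q (x ^ θ) = 0 := by
  set K := (-1 : ℝ) ^ j * Gamma (θ * j + c + 1)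
  have hq' : q = fun y => ∑ l ∈ range (j + 1),
      K * ((-1) ^ l * j.choose l / Gamma (θ * l + c + 1)) * y ^ l := by
    ext y
    rw [hq, mul_sum]
    exact sum_congr rfl fun l _ => by ring
  have hc1 : 0 < c + 1 := by linarith
  have hterm : ∀ l : ℕ, K * ((-1) ^ l * j.choose l / Gamma (θ * l + c + 1)) *
      Gamma (θ * l + (c + m) + 1) =
        K * ((-1) ^ l * j.choose l * ((ascPochhammer ℝ m).comp (C θ * X + C (c + 1))).eval ↑l) := by
    intro l
    rw [show θ * l + (c + m) + 1 = θ * l + (c + 1) + m by ring,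
      Gamma_mul_natCast_add_add_nat hθ.le hc1 l m,
      show θ * l + c + 1 = θ * l + (c + 1) by ring]
    field_simp
  have hm' : -1 < c + m := by linarith [(Nat.cast_nonneg m : (0 : ℝ) ≤ m)]
  rw [hq', integral_rpow_mul_exp_neg_mul_sum_rpow_pow hθ.le hm']
  simp_rw [hterm]
  rw [← mul_sum, sum_range_alternating_choose_mul_eval_eq_zero
    ((natDegree_ascPochhammer_comp_linear_le m θ (c + 1)).trans_lt hm), mul_zero]

/-- Konhauser's biorthogonal polynomial `q_j` for the Laguerre weight
annihilates the moments `x^(c+m)` for `m < j`. -/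
theorem stmt_5 (θ c : ℝ) (hθ : 0 < θ) (hc : -1 < c) (j : ℕ) (hj : 1 ≤ j)
    (q : ℝ → ℝ)
    (hq : ∀ y : ℝ, q y =
      (-1 : ℝ) ^ j * Real.Gamma (θ * j + c + 1) *
        ∑ l ∈ Finset.range (j + 1),
          (-1 : ℝ) ^ l * (j.choose l : ℝ) * y ^ l / Real.Gamma (θ * l + c + 1))
    (m : ℕ) (hm : m < j) :
    ∫ x in Set.Ioi (0 : ℝ), x ^ (c + (m : ℝ)) * Real.exp (-x) * q (x ^ θ) = 0 :=
  stmt_5_general θ c hθ hc j q hq m hm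
end

section
/- Let θ > 0 be real and p ≥ 1 an integer. Then ∑_{k=0}^{p−1} [ (1−p)_k · (−p(1+θ))_k / ( (2 − p(1+θ))_k · k! ) ] · ((1+θ)/θ)^k = (−1)^{p−1} · (p(1+θ) − 1) / θ^p, where (a)_k := ∏_{i=0}^{k−1} (a + i) denotes the rising factorial (Pochhammer symbol) of a real number a. (Note that 2 − p(1+θ) + i < 0 for all 0 ≤ i ≤ p−2, so all denominators are nonzero.) -/
/-!
Write `n = p - 1`, `c = p(1+θ)` and `y = -(1+θ)/θ`. Since `(-n)_k = (-1)^k k! C(n,k)` and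
`(-c)_k / (2-c)_k = c(c-1) / ((c-k)(c-k-1))`, the sum is `c(c-1) ∑ C(n,k) y^k / ((c-k)(c-k-1))`.
The value of `θ` is exactly what makes `c(1+y) = (n+1)y`; under this relation, partial fractions
and Pascal's rule split each term into a telescoping difference minus `C(n+1,k+1) y^(k+1) / c`,
so by the binomial theorem the sum is `-(c-1)(1+y)^(n+1)`, and `1 + y = -1/θ`.
-/

/-- The rising factorial (Pochhammer symbol) `(a)_k = a(a+1)⋯(a+k-1)` of a real number. -/
noncomputable def risingFac (a : ℝ) (k : ℕ) : ℝ := ∏ i ∈ Finset.range k, (a + i)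

open Finset Polynomial

lemma risingFac_succ (a : ℝ) (k : ℕ) : risingFac a (k + 1) = risingFac a k * (a + k) :=
  prod_range_succ _ _

lemma risingFac_eq_eval_ascPochhammer (a : ℝ) (k : ℕ) :
    risingFac a k = (ascPochhammer ℝ k).eval a := by
  induction k with
  | zero => simp [risingFac]
  | succ k ih => rw [risingFac_succ, ih, ascPochhammer_succ_eval]

lemma risingFac_neg_natCast (n k : ℕ) :
    risingFac (-n) k = (-1) ^ k * k.factorial * n.choose k := by
  rw [risingFac_eq_eval_ascPochhammer, ascPochhammer_eval_neg_eq_descPochhammer,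
    descPochhammer_eval_eq_descFactorial, Nat.descFactorial_eq_factorial_mul_choose]
  push_cast
  ring

lemma risingFac_ne_zero {a : ℝ} {k : ℕ} (h : ∀ j < k, (j : ℝ) ≠ -a) : risingFac a k ≠ 0 := by
  rw [risingFac_eq_eval_ascPochhammer, ne_eq, ascPochhammer_eval_eq_zero_iff]
  exact fun ⟨j, hj, hja⟩ => h j hj hja

lemma risingFac_two_sub_mul (c : ℝ) (k : ℕ) :
    risingFac (2 - c) k * (c * (c - 1)) = risingFac (-c) k * ((c - k) * (c - k - 1)) := by
  induction k with
  | zero => simp [risingFac]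
  | succ k ih =>
    rw [risingFac_succ, risingFac_succ]
    push_cast
    linear_combination (2 - c + k) * ih

lemma choose_pow_sub_choose_pow_succ (n j : ℕ) {c y : ℝ} (hcy : c * (1 + y) = (n + 1) * y) :
    c * (n.choose j * y ^ j - n.choose (j + 1) * y ^ (j + 1)) =
      -(c - (j + 1)) * ((n + 1).choose (j + 1) * y ^ (j + 1)) := by
  have hy : 1 + y ≠ 0 := by
    intro hy
    have : ((n : ℝ) + 1) * y = 0 := by rw [← hcy, hy, mul_zero]
    rw [show y = -1 by linear_combination hy] at this
    linarith
  have hA : ((n + 1 : ℕ) : ℝ) * n.choose j = (n + 1).choose (j + 1) * (j + 1) := by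
    exact_mod_cast Nat.add_one_mul_choose_eq n j
  have hP : ((n + 1).choose (j + 1) : ℝ) = n.choose j + n.choose (j + 1) := by
    exact_mod_cast Nat.choose_succ_succ n j
  push_cast at hA
  refine mul_left_cancel₀ hy ?_
  linear_combination
    (y ^ j * (n.choose j - n.choose (j + 1) * y) + (n + 1).choose (j + 1) * y ^ (j + 1)) * hcy +
      y ^ (j + 1) * (1 + y) * hA + y ^ (j + 2) * (n + 1) * hP

lemma choose_pow_div_eq_sub_sub (n k : ℕ) {c y : ℝ} (hcy : c * (1 + y) = (n + 1) * y)
    (hc : c ≠ 0) (hk : c - k ≠ 0) (hk' : c - (k + 1 : ℕ) ≠ 0) :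
    n.choose k * y ^ k / ((c - k) * (c - k - 1)) =
      (n.choose (k + 1) * y ^ (k + 1) / (c - (k + 1 : ℕ)) - n.choose k * y ^ k / (c - k)) -
        (n + 1).choose (k + 1) * y ^ (k + 1) / c := by
  have key := choose_pow_sub_choose_pow_succ n k hcy
  push_cast at hk' ⊢
  have hk1 : c - k - 1 ≠ 0 := by rwa [sub_sub]
  field_simp
  linear_combination (c - k) * (c - k - 1) * key

theorem sum_choose_mul_pow_div (n : ℕ) {c y : ℝ} (hcy : c * (1 + y) = (n + 1) * y)
    (hc : ∀ j : ℕ, j ≤ n + 1 → c ≠ j) :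
    ∑ k ∈ range (n + 1), n.choose k * y ^ k / ((c - k) * (c - k - 1)) = -(1 + y) ^ (n + 1) / c := by
  have hc' : ∀ j ≤ n + 1, c - j ≠ 0 := fun j hj => sub_ne_zero.2 (hc j hj)
  have hc0 : c ≠ 0 := by simpa using hc 0 (Nat.zero_le _)
  rw [sum_congr rfl fun k hk => choose_pow_div_eq_sub_sub n k hcy hc0
      (hc' k (by simp at hk; omega)) (hc' (k + 1) (by simp at hk; omega)),
    sum_sub_distrib, sum_range_sub (fun k => n.choose k * y ^ k / (c - k)), ← sum_div,
    add_comm 1 y, add_pow, sum_range_succ' _ (n + 1)]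
  simp only [Nat.choose_succ_self, CharP.cast_eq_zero, mul_comm, mul_zero, Nat.cast_add,
    Nat.cast_one, zero_div, Nat.choose_zero_right, pow_zero, mul_one, sub_zero, one_div, zero_sub,
    Nat.reduceSubDiff, one_pow, tsub_zero, neg_add_rev]
  field_simp
  ring

lemma risingFac_hypergeometric_term (n k : ℕ) {c : ℝ} (y : ℝ) (h2c : risingFac (2 - c) k ≠ 0)
    (hk : (c - k) * (c - k - 1) ≠ 0) :
    risingFac (-n) k * risingFac (-c) k / (risingFac (2 - c) k * k.factorial) * (-y) ^ k =
      c * (c - 1) * (n.choose k * y ^ k / ((c - k) * (c - k - 1))) := by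
  have hsign : (-1 : ℝ) ^ k * (-y) ^ k = y ^ k := by rw [← mul_pow]; ring
  rw [risingFac_neg_natCast, (eq_div_iff hk).2 (risingFac_two_sub_mul c k).symm]
  field_simp
  rw [← hsign]
  ring

theorem sum_hypergeometric_eq (n : ℕ) {c y : ℝ} (hcy : c * (1 + y) = (n + 1) * y)
    (hc : ∀ j : ℕ, j ≤ n + 1 → c ≠ j) :
    ∑ k ∈ range (n + 1),
        risingFac (-n) k * risingFac (-c) k / (risingFac (2 - c) k * k.factorial) * (-y) ^ k =
      -(c - 1) * (1 + y) ^ (n + 1) := by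
  have hc0 : c ≠ 0 := by simpa using hc 0 (Nat.zero_le _)
  have hterm : ∀ k ∈ range (n + 1), _ := fun k hk => by
    have hkn : k ≤ n := Nat.lt_succ_iff.mp (mem_range.mp hk)
    refine risingFac_hypergeometric_term (c := c) n k y (risingFac_ne_zero fun j hj hjc => ?_) ?_
    · exact hc (j + 2) (by omega) (by push_cast; linarith)
    · refine mul_ne_zero (sub_ne_zero.2 (hc k (by omega))) ?_
      rw [sub_sub, sub_ne_zero]
      exact_mod_cast hc (k + 1) (by omega)
  rw [sum_congr rfl hterm, ← mul_sum, sum_choose_mul_pow_div n hcy hc]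
  field_simp

/-- evaluation of the terminating Gauss hypergeometric sum
`₂F₁(1−p, −p(1+θ); 2−p(1+θ); (1+θ)/θ)`. -/
theorem stmt_11 (θ : ℝ) (hθ : 0 < θ) (p : ℕ) (hp : 1 ≤ p) :
    ∑ k ∈ Finset.range p,
        risingFac (1 - p) k * risingFac (-(p : ℝ) * (1 + θ)) k /
          (risingFac (2 - p * (1 + θ)) k * (Nat.factorial k : ℝ)) * ((1 + θ) / θ) ^ k
      = (-1 : ℝ) ^ (p - 1) * ((p : ℝ) * (1 + θ) - 1) / θ ^ p := by
  obtain ⟨n, rfl⟩ : ∃ n, p = n + 1 := ⟨p - 1, by omega⟩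
  set c : ℝ := (n + 1) * (1 + θ) with hc_def
  have hcy : c * (1 + -((1 + θ) / θ)) = (n + 1) * -((1 + θ) / θ) := by
    field_simp
    ring
  have hc : ∀ j : ℕ, j ≤ n + 1 → c ≠ j := fun j hj => by
    have : (j : ℝ) ≤ n + 1 := by exact_mod_cast hj
    have : 0 < (n + 1) * θ := by positivity
    linarith
  have hy : 1 + -((1 + θ) / θ) = -1 / θ := by
    field_simp
    ring
  push_cast
  rw [show (1 : ℝ) - (n + 1) = -n by ring, show -((n : ℝ) + 1) * (1 + θ) = -c by ring,
    ← neg_neg ((1 + θ) / θ), sum_hypergeometric_eq n hcy hc, hy, div_pow, pow_succ (-1 : ℝ),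
    hc_def]
  ring
end

section
/- Let θ > 0 be real and let φ ∈ (0, π/(θ+1)). Set x = (sin((θ+1)φ))^{θ+1} / ( sin(φ) · (sin(θφ))^{θ} ) (a positive real) and let u = (sin((θ+1)φ)/sin(θφ)) · e^{iφ} ∈ ℂ. Then u^{θ+1} = (u − 1) · x, where u^{θ+1} denotes the principal-branch complex power. -/
/-- the saddle point equation `u^{θ+1} = (u − 1)x` for the Laguerre
Muttalib–Borodin ensemble, with the trigonometric parametrisation of `x` and `u`. -/
theorem stmt_13 (θ : ℝ) (hθ : 0 < θ) (φ : ℝ) (hφ : φ ∈ Set.Ioo 0 (Real.pi / (θ + 1)))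
    (x : ℝ) (hx : x = Real.sin ((θ + 1) * φ) ^ (θ + 1) / (Real.sin φ * Real.sin (θ * φ) ^ θ))
    (u : ℂ)
    (hu : u = ((Real.sin ((θ + 1) * φ) / Real.sin (θ * φ) : ℝ) : ℂ) *
      Complex.exp (Complex.I * (φ : ℂ))) :
    u ^ ((θ : ℂ) + 1) = (u - 1) * (x : ℂ) := by
  obtain ⟨hφ0, hφπ⟩ := hφ
  have hθ1 : (0:ℝ) < θ + 1 := by linarith
  have h2 : (θ + 1) * φ < Real.pi := by
    have := (lt_div_iff₀ hθ1).mp hφπ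
    linarith
  have h1 : 0 < (θ + 1) * φ := by positivity
  have h3 : 0 < θ * φ := by positivity
  have h4 : θ * φ < Real.pi := by nlinarith
  have h5 : φ < Real.pi := by nlinarith
  have hs : 0 < Real.sin ((θ + 1) * φ) := Real.sin_pos_of_pos_of_lt_pi h1 h2
  have ht : 0 < Real.sin (θ * φ) := Real.sin_pos_of_pos_of_lt_pi h3 h4
  have hsφ : 0 < Real.sin φ := Real.sin_pos_of_pos_of_lt_pi hφ0 h5
  have hdiv : 0 < Real.sin ((θ + 1) * φ) / Real.sin (θ * φ) := div_pos hs ht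
  have key : u = Complex.exp
      (↑(Real.log (Real.sin ((θ + 1) * φ) / Real.sin (θ * φ))) + Complex.I * (φ:ℂ)) := by
    rw [hu, Complex.exp_add, ← Complex.ofReal_exp, Real.exp_log hdiv]
  have hlog : Complex.log u =
      ↑(Real.log (Real.sin ((θ + 1) * φ) / Real.sin (θ * φ))) + Complex.I * (φ:ℂ) := by
    rw [key, Complex.log_exp]
    · simp; linarith [Real.pi_pos]
    · simp; linarith
  have hu0 : u ≠ 0 := by rw [key]; exact Complex.exp_ne_zero _
  have hLHS : u ^ ((θ:ℂ)+1) =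
      (((Real.sin ((θ + 1) * φ) / Real.sin (θ * φ)) ^ (θ+1) : ℝ) : ℂ) *
        Complex.exp (Complex.I * (((θ+1)*φ : ℝ):ℂ)) := by
    rw [Complex.cpow_def_of_ne_zero hu0, hlog, add_mul, Complex.exp_add]
    congr 1
    · rw [Real.rpow_def_of_pos hdiv, Complex.ofReal_exp]
      congr 1
      push_cast; ring
    · congr 1
      push_cast; ring
  have htrig : Real.sin (θ * φ) =
      Real.sin ((θ+1)*φ) * Real.cos φ - Real.cos ((θ+1)*φ) * Real.sin φ := by
    rw [show θ*φ = (θ+1)*φ - φ by ring, Real.sin_sub]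
  have e1 : Complex.sin (((θ:ℂ)+1)*(φ:ℂ)) * Complex.cos (φ:ℂ) - Complex.sin ((θ:ℂ)*(φ:ℂ))
      = Complex.sin (φ:ℂ) * Complex.cos (((θ:ℂ)+1)*(φ:ℂ)) := by
    have h : Real.sin ((θ+1)*φ) * Real.cos φ - Real.sin (θ*φ)
        = Real.sin φ * Real.cos ((θ+1)*φ) := by linarith [htrig]
    exact_mod_cast h
  have hsub : u - 1 = ((Real.sin φ / Real.sin (θ * φ) : ℝ) : ℂ) *
      Complex.exp (Complex.I * (((θ+1)*φ : ℝ):ℂ)) := by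
    rw [hu, show Complex.I * (((θ+1)*φ : ℝ):ℂ) = ((((θ+1)*φ : ℝ)):ℂ) * Complex.I by ring,
        Complex.exp_mul_I,
        show Complex.I * (φ:ℂ) = (φ:ℂ) * Complex.I by ring, Complex.exp_mul_I]
    have htC : Complex.sin ((θ:ℂ)*(φ:ℂ)) ≠ 0 := by
      have : ((Real.sin (θ * φ) : ℝ):ℂ) ≠ 0 := by exact_mod_cast ht.ne'
      push_cast at this; exact this
    push_cast
    field_simp
    linear_combination e1
  have hxx : ((Real.sin ((θ + 1) * φ) / Real.sin (θ * φ)) ^ (θ+1) : ℝ)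
      = Real.sin φ / Real.sin (θ * φ) *
        (Real.sin ((θ + 1) * φ) ^ (θ+1) / (Real.sin φ * Real.sin (θ * φ) ^ θ)) := by
    rw [Real.div_rpow hs.le ht.le, Real.rpow_add ht, Real.rpow_one]
    have h1' : Real.sin (θ*φ) ^ θ ≠ 0 := by positivity
    field_simp
  rw [hLHS, hsub, hx, hxx]
  push_cast
  ring
end

section
/- Let θ > 0 be real and let φ ∈ (0, π/(θ+1)). Set x = (θ^θ/(1+θ)^{1+θ}) · (sin((θ+1)φ))^{θ+1} / ( sin(φ) · (sin(θφ))^{θ} ), v = (θ sin((θ+1)φ) / ((1+θ) sin(θφ))) · e^{iφ} ∈ ℂ, and u = (1/θ) · v/(1 − v). Then u^{θ+1} = x · (1/θ + u)^{θ} · (u − 1), where w^s denotes the principal-branch complex power. -/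
/-!
With `w = 1/θ + u = 1/(θ(1 - v))` one has `u = v w` and `u - 1 = ((1 + θ) v - θ) w`. Since
`Im u = Im v / (θ |1 - v|²) > 0` and `Im w = Im u`, the three points `v`, `w`, `u = v w` lie in the
upper half plane, so `arg u = arg v + arg w` and the principal power splits:
`u^{θ+1} = v^{θ+1} w^θ w`. The equation thus reduces to `v^{θ+1} = x ((1 + θ) v - θ)`. For
`v = r e^{iφ}` the left side is `r^{θ+1} e^{i(θ+1)φ}` with `r^{θ+1} = x θ sin φ / sin (θφ)`, and the
right side is the same by `sin ((θ+1)φ) e^{iφ} - sin (θφ) = sin φ e^{i(θ+1)φ}`.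
-/

open Complex Real

namespace Complex

theorem arg_add_arg_le_pi_of_im_pos {a b : ℂ} (ha : 0 < a.im) (hb : 0 < b.im)
    (hab : 0 ≤ (a * b).im) : arg a + arg b ≤ π := by
  by_contra! hπ
  have hα := arg_lt_pi_iff.2 (Or.inr ha.ne')
  have hβ := arg_lt_pi_iff.2 (Or.inr hb.ne')
  have hsin : Real.sin (arg a + arg b) < 0 := by
    rw [← Real.sin_sub_two_pi]
    exact Real.sin_neg_of_neg_of_neg_pi_lt (by linarith) (by linarith)
  have him : (a * b).im = ‖a‖ * ‖b‖ * Real.sin (arg a + arg b) := by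
    rw [mul_im, Real.sin_add, ← norm_mul_cos_arg a, ← norm_mul_cos_arg b,
      ← norm_mul_sin_arg a, ← norm_mul_sin_arg b]
    ring
  have hnorm : 0 < ‖a‖ * ‖b‖ := by
    have := norm_pos_iff.2 (ne_of_apply_ne im ha.ne')
    have := norm_pos_iff.2 (ne_of_apply_ne im hb.ne')
    positivity
  nlinarith

theorem mul_cpow_of_im_pos {a b : ℂ} (ha : 0 < a.im) (hb : 0 < b.im)
    (hab : 0 ≤ (a * b).im) (s : ℂ) : (a * b) ^ s = a ^ s * b ^ s := by
  have ha₀ : a ≠ 0 := ne_of_apply_ne im ha.ne'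
  have hb₀ : b ≠ 0 := ne_of_apply_ne im hb.ne'
  have hlog : log (a * b) = log a + log b :=
    log_mul ha₀ hb₀ ⟨by linarith [neg_pi_lt_arg a, arg_nonneg_iff.2 hb.le],
      arg_add_arg_le_pi_of_im_pos ha hb hab⟩
  rw [cpow_def_of_ne_zero (mul_ne_zero ha₀ hb₀), cpow_def_of_ne_zero ha₀,
    cpow_def_of_ne_zero hb₀, hlog, add_mul, exp_add]

theorem div_one_sub_im (v : ℂ) : (v / (1 - v)).im = v.im / normSq (1 - v) := by
  rw [div_im, sub_re, sub_im, one_re, one_im]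
  ring

theorem ofReal_mul_exp_mul_I_cpow {r : ℝ} (hr : 0 < r) {φ : ℝ} (hφ : φ ∈ Set.Ioc (-π) π)
    (s : ℂ) : ((r : ℂ) * exp (φ * I)) ^ s = (r : ℂ) ^ s * exp (s * φ * I) := by
  have hr₀ : (r : ℂ) ≠ 0 := ofReal_ne_zero.2 hr.ne'
  rw [cpow_def_of_ne_zero (mul_ne_zero hr₀ (exp_ne_zero _)), log_ofReal_mul hr (exp_ne_zero _),
    log_exp (by simpa using hφ.1) (by simpa using hφ.2), cpow_def_of_ne_zero hr₀,
    ofReal_log hr.le, add_mul, exp_add]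
  ring_nf

theorem sin_add_mul_exp_sub_sin (t s : ℂ) :
    sin (t + s) * exp (s * I) - sin t = sin s * exp ((t + s) * I) := by
  rw [exp_mul_I, exp_mul_I, sin_add, cos_add]
  linear_combination sin t * sin_sq_add_cos_sq s

end Complex

theorem saddle_eq_of_cpow_add_one_eq {θ : ℝ} (hθ : 0 < θ) {x v u : ℂ} (hv : 0 < v.im)
    (hu : u = 1 / (θ : ℂ) * (v / (1 - v)))
    (h : v ^ ((θ : ℂ) + 1) = x * ((1 + θ) * v - θ)) :
    u ^ ((θ : ℂ) + 1) = x * (1 / (θ : ℂ) + u) ^ (θ : ℂ) * (u - 1) := by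
  have hθ₀ : (θ : ℂ) ≠ 0 := ofReal_ne_zero.2 hθ.ne'
  have h1v : 1 - v ≠ 0 := fun h0 => by
    have := congrArg im (sub_eq_zero.1 h0)
    simp only [one_im] at this
    linarith
  set w := 1 / (θ : ℂ) + u with hw
  have huvw : u = v * w := by rw [hw, hu]; field_simp; ring
  have hu_im : 0 < u.im := by
    rw [hu, one_div, ← ofReal_inv, im_ofReal_mul, div_one_sub_im]
    have := normSq_pos.2 h1v
    positivity
  have hw_im : w.im = u.im := by simp [hw, ← ofReal_inv]
  have hw₀ : w ≠ 0 := ne_of_apply_ne im (by rw [hw_im, zero_im]; exact hu_im.ne')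
  have hvw : ((1 + θ) * v - θ) * w = u - 1 := by rw [hw, hu]; field_simp; ring
  calc u ^ ((θ : ℂ) + 1) = v ^ ((θ : ℂ) + 1) * w ^ ((θ : ℂ) + 1) := by
        rw [huvw, mul_cpow_of_im_pos hv (hw_im ▸ hu_im) (huvw ▸ hu_im.le)]
    _ = x * w ^ (θ : ℂ) * (((1 + θ) * v - θ) * w) := by
        rw [h, cpow_add _ _ hw₀, cpow_one]; ring
    _ = x * w ^ (θ : ℂ) * (u - 1) := by rw [hvw]

noncomputable def saddleRadius (θ φ : ℝ) : ℝ :=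
  θ * Real.sin ((θ + 1) * φ) / ((1 + θ) * Real.sin (θ * φ))

noncomputable def saddleX (θ φ : ℝ) : ℝ :=
  θ ^ θ / (1 + θ) ^ (1 + θ) *
    (Real.sin ((θ + 1) * φ) ^ (θ + 1) / (Real.sin φ * Real.sin (θ * φ) ^ θ))

noncomputable def saddlePoint (θ φ : ℝ) : ℂ :=
  saddleRadius θ φ * exp (I * φ)

section SaddlePoint

variable {θ φ : ℝ} (hθ : 0 < θ) (hφ : φ ∈ Set.Ioo 0 (π / (θ + 1)))
include hθ hφ

theorem sin_mul_pos_of_le_add_one {k : ℝ} (hk : 0 < k) (hkθ : k ≤ θ + 1) :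
    0 < Real.sin (k * φ) := by
  have hπ : (θ + 1) * φ < π := (lt_div_iff₀' (by linarith)).1 hφ.2
  exact Real.sin_pos_of_pos_of_lt_pi (mul_pos hk hφ.1)
    (lt_of_le_of_lt (mul_le_mul_of_nonneg_right hkθ hφ.1.le) hπ)

theorem saddleRadius_pos : 0 < saddleRadius θ φ := by
  have := sin_mul_pos_of_le_add_one hθ hφ hθ (by linarith)
  have := sin_mul_pos_of_le_add_one hθ hφ (by linarith) le_rfl
  unfold saddleRadius
  positivity

theorem saddlePoint_im_pos : 0 < (saddlePoint θ φ).im := by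
  rw [saddlePoint, mul_comm I, im_ofReal_mul, exp_ofReal_mul_I_im]
  exact mul_pos (saddleRadius_pos hθ hφ)
    (one_mul φ ▸ sin_mul_pos_of_le_add_one hθ hφ one_pos (by linarith))

theorem saddleRadius_rpow_add_one :
    saddleRadius θ φ ^ (θ + 1) = saddleX θ φ * θ * Real.sin φ / Real.sin (θ * φ) := by
  have ha := one_mul φ ▸ sin_mul_pos_of_le_add_one hθ hφ one_pos (by linarith)
  have hb := sin_mul_pos_of_le_add_one hθ hφ hθ (by linarith)
  have hc := sin_mul_pos_of_le_add_one hθ hφ (by linarith) le_rfl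
  rw [saddleRadius, saddleX, Real.div_rpow (by positivity) (by positivity),
    Real.mul_rpow hθ.le hc.le, Real.mul_rpow (by positivity) hb.le,
    Real.rpow_add_one hθ.ne', Real.rpow_add_one hb.ne', add_comm 1 θ]
  field_simp

theorem one_add_mul_saddlePoint_sub :
    (1 + θ) * saddlePoint θ φ - θ =
      ((θ * Real.sin φ / Real.sin (θ * φ) : ℝ) : ℂ) * exp (((θ + 1) * φ : ℝ) * I) := by
  have hb := sin_mul_pos_of_le_add_one hθ hφ hθ (by linarith)
  have hb₀ : Complex.sin (θ * φ) ≠ 0 := by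
    rw [← ofReal_mul, ← ofReal_sin]
    exact ofReal_ne_zero.2 hb.ne'
  have h1θ : (1 + θ : ℂ) ≠ 0 := by exact_mod_cast (by linarith : (1 + θ : ℝ) ≠ 0)
  have key := sin_add_mul_exp_sub_sin ((θ : ℂ) * φ) φ
  rw [show (θ : ℂ) * φ + φ = (θ + 1) * φ by ring] at key
  rw [saddlePoint, saddleRadius]
  push_cast
  field_simp
  linear_combination θ * key

theorem saddlePoint_cpow_add_one :
    saddlePoint θ φ ^ ((θ : ℂ) + 1) =
      saddleX θ φ * ((1 + θ) * saddlePoint θ φ - θ) := by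
  have hr := saddleRadius_pos hθ hφ
  have hφπ : φ < π := by
    have := (lt_div_iff₀' (by linarith : 0 < θ + 1)).1 hφ.2
    nlinarith [hφ.1]
  rw [one_add_mul_saddlePoint_sub hθ hφ, saddlePoint, mul_comm I,
    ofReal_mul_exp_mul_I_cpow hr ⟨by linarith [hφ.1], hφπ.le⟩,
    ← ofReal_one, ← ofReal_add, ← ofReal_cpow hr.le, saddleRadius_rpow_add_one hθ hφ]
  push_cast
  ring

end SaddlePoint

/-- the saddle point equation `u^{θ+1} = x (1/θ + u)^θ (u − 1)` for the
Jacobi Muttalib–Borodin ensemble, with the trigonometric parametrisation of `x`, `v`, `u`. -/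
theorem stmt_14 (θ : ℝ) (hθ : 0 < θ) (φ : ℝ) (hφ : φ ∈ Set.Ioo 0 (Real.pi / (θ + 1)))
    (x : ℝ)
    (hx : x = θ ^ θ / (1 + θ) ^ (1 + θ) *
      (Real.sin ((θ + 1) * φ) ^ (θ + 1) / (Real.sin φ * Real.sin (θ * φ) ^ θ)))
    (v : ℂ)
    (hv : v = ((θ * Real.sin ((θ + 1) * φ) / ((1 + θ) * Real.sin (θ * φ)) : ℝ) : ℂ) *
      Complex.exp (Complex.I * (φ : ℂ)))
    (u : ℂ) (hu : u = (1 / (θ : ℂ)) * (v / (1 - v))) :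
    u ^ ((θ : ℂ) + 1) = (x : ℂ) * (1 / (θ : ℂ) + u) ^ (θ : ℂ) * (u - 1) := by
  subst hx hv
  exact saddle_eq_of_cpow_add_one_eq hθ (saddlePoint_im_pos hθ hφ) hu
    (saddlePoint_cpow_add_one hθ hφ)
end

section
/- Let θ > 0 be real. For every x ∈ (0, 1) there exists a unique φ ∈ (0, π/(θ+1)) such that x = (θ^θ/(1+θ)^{1+θ}) · (sin((θ+1)φ))^{θ+1} / ( sin(φ) · (sin(θφ))^{θ} ). -/
/-!
Writing `sin (c φ) = c φ · sinc (c φ)`, the constant `θ^θ/(1+θ)^(1+θ)` cancels and the map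
becomes `sinc((θ+1)φ)^(θ+1) / (sinc φ · sinc(θφ)^θ)`, which is continuous on `[0, π/(θ+1)]`
with value `1` at `0` and `0` at `π/(θ+1)`; the intermediate value theorem gives existence.
For uniqueness, up to a constant the logarithm of the map is
`(θ+1) log sin((θ+1)φ) - log sin φ - θ log sin(θφ)`, whose derivative is
`((θ+1) k((θ+1)φ) - k φ - θ k(θφ)) / φ` with `k t = t cot t`, which is negative because `k` is
strictly decreasing on `(0, π)`.
-/

open Real Set

theorem mul_mem_Ioo_of_mem_Ioo_div {c θ φ : ℝ} (hθ : 0 < θ) (hφ : φ ∈ Ioo 0 (c / (θ + 1))) :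
    (θ + 1) * φ ∈ Ioo 0 c ∧ φ ∈ Ioo 0 c ∧ θ * φ ∈ Ioo 0 c := by
  obtain ⟨hφ, hφc⟩ := hφ
  rw [lt_div_iff₀ (by linarith)] at hφc
  exact ⟨⟨by positivity, by linarith⟩, ⟨hφ, by nlinarith⟩, ⟨by positivity, by nlinarith⟩⟩

theorem strictAntiOn_mul_cos_div_sin :
    StrictAntiOn (fun t => t * (cos t / sin t)) (Ioo 0 π) := by
  have hderiv : ∀ t ∈ Ioo 0 π,
      HasDerivAt (fun t => t * (cos t / sin t)) ((sin t * cos t - t) / sin t ^ 2) t := by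
    intro t ht
    have hs : sin t ≠ 0 := (sin_pos_of_pos_of_lt_pi ht.1 ht.2).ne'
    refine ((hasDerivAt_id t).mul ((hasDerivAt_cos t).div (hasDerivAt_sin t) hs)).congr_deriv ?_
    simp only [id, Pi.div_apply]
    field_simp
    linear_combination (-t) * sin_sq_add_cos_sq t
  refine strictAntiOn_of_deriv_neg (convex_Ioo 0 π)
    (fun t ht => (hderiv t ht).continuousAt.continuousWithinAt) fun t ht => ?_
  rw [interior_Ioo] at ht
  rw [(hderiv t ht).deriv]
  have h2t : sin (2 * t) < 2 * t := sin_lt (by linarith [ht.1])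
  rw [sin_two_mul] at h2t
  exact div_neg_of_neg_of_pos (by linarith) (pow_pos (sin_pos_of_pos_of_lt_pi ht.1 ht.2) 2)

theorem strictAntiOn_dilation_combination {L L' : ℝ → ℝ} {c θ : ℝ} (hθ : 0 < θ)
    (hL : ∀ t ∈ Ioo 0 c, HasDerivAt L (L' t) t)
    (hk : StrictAntiOn (fun t => t * L' t) (Ioo 0 c)) :
    StrictAntiOn (fun φ => (θ + 1) * L ((θ + 1) * φ) - L φ - θ * L (θ * φ))
      (Ioo 0 (c / (θ + 1))) := by
  have hderiv : ∀ φ ∈ Ioo 0 (c / (θ + 1)),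
      HasDerivAt (fun φ => (θ + 1) * L ((θ + 1) * φ) - L φ - θ * L (θ * φ))
        ((θ + 1) * (L' ((θ + 1) * φ) * (θ + 1)) - L' φ - θ * (L' (θ * φ) * θ)) φ := by
    intro φ hφ
    obtain ⟨h₁, h₂, h₃⟩ := mul_mem_Ioo_of_mem_Ioo_div hθ hφ
    have d₁ := (hL _ h₁).comp φ ((hasDerivAt_id φ).const_mul (θ + 1))
    have d₃ := (hL _ h₃).comp φ ((hasDerivAt_id φ).const_mul θ)
    simp only [mul_one] at d₁ d₃
    exact ((d₁.const_mul (θ + 1)).sub (hL φ h₂)).sub (d₃.const_mul θ)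
  refine strictAntiOn_of_deriv_neg (convex_Ioo 0 _)
    (fun φ hφ => (hderiv φ hφ).continuousAt.continuousWithinAt) fun φ hφ => ?_
  rw [interior_Ioo] at hφ
  rw [(hderiv φ hφ).deriv]
  obtain ⟨h₁, h₂, h₃⟩ := mul_mem_Ioo_of_mem_Ioo_div hθ hφ
  have k₂ : (θ + 1) * φ * L' ((θ + 1) * φ) < φ * L' φ := hk h₂ h₁ (by nlinarith [hφ.1])
  have k₃ : (θ + 1) * φ * L' ((θ + 1) * φ) < θ * φ * L' (θ * φ) := hk h₃ h₁ (by nlinarith [hφ.1])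
  refine neg_of_mul_neg_right (a := φ) ?_ hφ.1.le
  nlinarith

theorem existsUnique_mem_Ioo_eq_of_continuousOn_Icc {α δ : Type*}
    [ConditionallyCompleteLinearOrder α] [TopologicalSpace α] [OrderTopology α] [DenselyOrdered α]
    [LinearOrder δ] [TopologicalSpace δ] [OrderClosedTopology δ]
    {f : α → δ} {a b : α} {y : δ} (hab : a ≤ b)
    (hf : ContinuousOn f (Icc a b)) (hinj : InjOn f (Ioo a b)) (hy : y ∈ Ioo (f b) (f a)) :
    ∃! t, t ∈ Ioo a b ∧ f t = y := by
  obtain ⟨t, ⟨hat, htb⟩, rfl⟩ := intermediate_value_Icc' hab hf (Ioo_subset_Icc_self hy)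
  have ht : t ∈ Ioo a b :=
    ⟨hat.lt_of_ne (by rintro rfl; exact hy.2.ne rfl),
      htb.lt_of_ne (by rintro rfl; exact hy.1.ne rfl)⟩
  exact ⟨t, ⟨ht, rfl⟩, fun s hs => hinj hs.1 ht hs.2⟩

noncomputable def trigParam (θ φ : ℝ) : ℝ :=
  θ ^ θ / (1 + θ) ^ (1 + θ) * (sin ((θ + 1) * φ) ^ (θ + 1) / (sin φ * sin (θ * φ) ^ θ))

noncomputable def sincRatio (θ φ : ℝ) : ℝ :=
  sinc ((θ + 1) * φ) ^ (θ + 1) / (sinc φ * sinc (θ * φ) ^ θ)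

theorem Real.sinc_pos_of_nonneg_of_lt_pi {x : ℝ} (h0 : 0 ≤ x) (hx : x < π) : 0 < sinc x := by
  rcases h0.eq_or_lt with rfl | h0
  · simp [sinc_zero]
  · rw [sinc_of_ne_zero h0.ne']
    exact div_pos (sin_pos_of_pos_of_lt_pi h0 hx) h0

section

variable {θ φ : ℝ}

theorem trigParam_eq_mul_exp (hθ : 0 < θ) (hφ : φ ∈ Ioo 0 (π / (θ + 1))) :
    trigParam θ φ = θ ^ θ / (1 + θ) ^ (1 + θ) *
      exp ((θ + 1) * log (sin ((θ + 1) * φ)) - log (sin φ) - θ * log (sin (θ * φ))) := by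
  obtain ⟨⟨h₁, h₁'⟩, ⟨h₂, h₂'⟩, ⟨h₃, h₃'⟩⟩ := mul_mem_Ioo_of_mem_Ioo_div hθ hφ
  rw [exp_sub, exp_sub, exp_log (sin_pos_of_pos_of_lt_pi h₂ h₂'), mul_comm (θ + 1), mul_comm θ,
    ← rpow_def_of_pos (sin_pos_of_pos_of_lt_pi h₁ h₁'),
    ← rpow_def_of_pos (sin_pos_of_pos_of_lt_pi h₃ h₃'), div_div, trigParam]

theorem continuousOn_sincRatio (hθ : 0 < θ) : ContinuousOn (sincRatio θ) (Icc 0 (π / (θ + 1))) := by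
  have hpos : ∀ φ ∈ Icc 0 (π / (θ + 1)), 0 < sinc φ ∧ 0 < sinc (θ * φ) := by
    rintro φ ⟨hφ, hφc⟩
    rw [le_div_iff₀ (by linarith)] at hφc
    exact ⟨sinc_pos_of_nonneg_of_lt_pi hφ (by nlinarith [pi_pos]),
      sinc_pos_of_nonneg_of_lt_pi (by positivity) (by nlinarith [pi_pos])⟩
  have hsinc : ∀ c : ℝ, Continuous fun φ => sinc (c * φ) :=
    fun c => continuous_sinc.comp (continuous_const.mul continuous_id)
  refine ContinuousOn.div ((hsinc _).continuousOn.rpow_const fun _ _ => Or.inr (by linarith))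
    (continuous_sinc.continuousOn.mul ((hsinc θ).continuousOn.rpow_const fun _ _ => Or.inr hθ.le))
    fun φ hφ => ?_
  exact (mul_pos (hpos φ hφ).1 (rpow_pos_of_pos (hpos φ hφ).2 θ)).ne'

theorem trigParam_eq_sincRatio (hθ : 0 < θ) (hφ : φ ∈ Ioo 0 (π / (θ + 1))) :
    trigParam θ φ = sincRatio θ φ := by
  obtain ⟨⟨h₁, h₁'⟩, ⟨h₂, h₂'⟩, ⟨h₃, h₃'⟩⟩ := mul_mem_Ioo_of_mem_Ioo_div hθ hφ
  have hsin : ∀ t : ℝ, t ≠ 0 → sin t = t * sinc t := fun t ht => by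
    rw [sinc_of_ne_zero ht]; field_simp
  have hs₁ := sinc_pos_of_nonneg_of_lt_pi h₁.le h₁'
  have hs₂ := sinc_pos_of_nonneg_of_lt_pi h₂.le h₂'
  have hs₃ := sinc_pos_of_nonneg_of_lt_pi h₃.le h₃'
  rw [trigParam, sincRatio, hsin _ h₁.ne', hsin φ h₂.ne', hsin _ h₃.ne', mul_rpow, mul_rpow,
    mul_rpow, mul_rpow, rpow_add_one h₂.ne', add_comm 1 θ]
  · have : 0 < θ ^ θ := rpow_pos_of_pos hθ θ
    have : 0 < (θ + 1) ^ (θ + 1) := rpow_pos_of_pos (by linarith) _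
    have : 0 < φ ^ θ := rpow_pos_of_pos h₂ θ
    have : 0 < sinc (θ * φ) ^ θ := rpow_pos_of_pos hs₃ θ
    field_simp
  all_goals positivity

theorem strictAntiOn_trigParam (hθ : 0 < θ) :
    StrictAntiOn (trigParam θ) (Ioo 0 (π / (θ + 1))) := by
  have hlog : StrictAntiOn
      (fun φ => (θ + 1) * log (sin ((θ + 1) * φ)) - log (sin φ) - θ * log (sin (θ * φ)))
      (Ioo 0 (π / (θ + 1))) :=
    strictAntiOn_dilation_combination hθ
      (fun t ht => (hasDerivAt_sin t).log (sin_pos_of_pos_of_lt_pi ht.1 ht.2).ne')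
      strictAntiOn_mul_cos_div_sin
  intro a ha b hb hab
  rw [trigParam_eq_mul_exp hθ ha, trigParam_eq_mul_exp hθ hb]
  exact mul_lt_mul_of_pos_left (exp_lt_exp.2 (hlog ha hb hab)) (by positivity)

@[simp]
theorem sincRatio_zero : sincRatio θ 0 = 1 := by
  simp [sincRatio]

theorem sincRatio_pi_div (hθ : θ + 1 ≠ 0) : sincRatio θ (π / (θ + 1)) = 0 := by
  simp [sincRatio, mul_div_cancel₀ _ hθ, sinc_of_ne_zero pi_ne_zero, hθ]

end

/-- the trigonometric parametrisation of `(0,1)` used for the global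
density of the Jacobi Muttalib–Borodin ensemble: every `x ∈ (0,1)` is obtained from a
unique `φ ∈ (0, π/(θ+1))`. -/
theorem stmt_15 (θ : ℝ) (hθ : 0 < θ) (x : ℝ) (hx : x ∈ Set.Ioo (0 : ℝ) 1) :
    ∃! φ : ℝ, φ ∈ Set.Ioo 0 (Real.pi / (θ + 1)) ∧
      x = θ ^ θ / (1 + θ) ^ (1 + θ) *
        (Real.sin ((θ + 1) * φ) ^ (θ + 1) / (Real.sin φ * Real.sin (θ * φ) ^ θ)) := by
  have hθ₁ : 0 < θ + 1 := by linarith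
  have hinj : InjOn (sincRatio θ) (Ioo 0 (π / (θ + 1))) :=
    (strictAntiOn_trigParam hθ).injOn.congr fun φ hφ => trigParam_eq_sincRatio hθ hφ
  have hx' : x ∈ Ioo (sincRatio θ (π / (θ + 1))) (sincRatio θ 0) := by
    rwa [sincRatio_zero, sincRatio_pi_div hθ₁.ne']
  refine (existsUnique_congr fun φ => and_congr_right fun hφ => ?_).mpr
    (existsUnique_mem_Ioo_eq_of_continuousOn_Icc (by positivity)
      (continuousOn_sincRatio hθ) hinj hx')
  rw [← trigParam_eq_sincRatio hθ hφ]
  exact eq_comm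
end
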